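/- For vectors v, w ∈ ℂ^n under the actions of T = (ℂ^×)^d and its compact subtorus K = (S^1)^d given by the same weight matrix, O_{K,v} = O_{K,w} if and only if O_{T,v} = O_{T,w} and |v_j| = |w_j| for all j ∈ [n]. -/

import Mathlib

open scoped BigOperators

noncomputable section

/-- Action of the torus `(ℂˣ)^d` on `ℂ^n` given by the integer weight matrix `M`:
coordinate `j` is scaled by the Laurent monomial `∏ i, (t i) ^ (M i j)`. -/
def torusAct {d n : ℕ} (M : Matrix (Fin d) (Fin n) ℤ) (t : Fin d → ℂˣ) (v : Fin n → ℂ) :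
    Fin n → ℂ := fun j => (∏ i, (t i : ℂ) ^ M i j) * v j

/-- The orbit of `v` under the torus action. -/
def torusOrbit {d n : ℕ} (M : Matrix (Fin d) (Fin n) ℤ) (v : Fin n → ℂ) : Set (Fin n → ℂ) :=
  {w | ∃ t : Fin d → ℂˣ, w = torusAct M t v}

/-- The Newton cone `C(v)`: the convex cone generated by the columns `m⁽ʲ⁾` of `M`
for `j` in the support of `v`. -/
def newtonCone {d n : ℕ} (M : Matrix (Fin d) (Fin n) ℤ) (v : Fin n → ℂ) : Set (Fin d → ℝ) :=
  {y | ∃ c : Fin n → ℝ, (∀ j, 0 ≤ c j) ∧ (∀ j, v j = 0 → c j = 0) ∧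
    y = ∑ j, c j • (fun i => (M i j : ℝ))}

/-- The lineality space `L(v) = C(v) ∩ (-C(v))` of the Newton cone. -/
def lineality {d n : ℕ} (M : Matrix (Fin d) (Fin n) ℤ) (v : Fin n → ℂ) : Set (Fin d → ℝ) :=
  newtonCone M v ∩ -newtonCone M v

/-- The essential support: indices `j` in the support of `v` whose weight column
lies in the lineality space of the Newton cone. -/
def esupp {d n : ℕ} (M : Matrix (Fin d) (Fin n) ℤ) (v : Fin n → ℂ) : Set (Fin n) :=
  {j | v j ≠ 0 ∧ (fun i => (M i j : ℝ)) ∈ lineality M v}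

/-- The orbit of `v` under the compact torus `K = (S¹)^d ⊆ T`, acting via the weight
matrix `M`. -/
def compactOrbit {d n : ℕ} (M : Matrix (Fin d) (Fin n) ℤ) (v : Fin n → ℂ) :
    Set (Fin n → ℂ) :=
  {w | ∃ t : Fin d → ℂˣ, (∀ i, ‖(t i : ℂ)‖ = 1) ∧ w = torusAct M t v}


/-! The phase map `z ↦ z / |z|` is a homomorphism `ℂˣ → S¹`, so it commutes with the weight
character `T → (ℂˣ)ⁿ`. If `w = t • v` has the same moduli as `v`, then on the support of `v` each
coordinate of the character at `t` has modulus one and equals its phase; hence `w` is the image of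
`v` under the phase of `t`, a point of `K`. Both orbits are orbits of subgroups of `(ℂˣ)ⁿ` acting
coordinatewise, so equality of orbits reduces to membership. -/

section WeightCharacter

variable {G : Type*} [CommGroup G] {d n : ℕ}

def weightChar (M : Matrix (Fin d) (Fin n) ℤ) : (Fin d → G) →* (Fin n → G) where
  toFun t j := ∏ i, t i ^ M i j
  map_one' := by funext j; simp
  map_mul' t s := by funext j; simp [mul_zpow, Finset.prod_mul_distrib]

@[simp]
lemma weightChar_apply (M : Matrix (Fin d) (Fin n) ℤ) (t : Fin d → G) (j : Fin n) :
    weightChar M t j = ∏ i, t i ^ M i j :=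
  rfl

lemma weightChar_comp {H : Type*} [CommGroup H] (M : Matrix (Fin d) (Fin n) ℤ) (φ : G →* H)
    (t : Fin d → G) : weightChar M (φ ∘ t) = φ ∘ weightChar M t := by
  funext j
  simp [map_prod, map_zpow]

end WeightCharacter

def unitsPhase : ℂˣ →* ℂˣ where
  toFun z := Units.mk0 (z / ‖(z : ℂ)‖) (div_ne_zero z.ne_zero (by simp))
  map_one' := by ext; simp
  map_mul' z w := by ext; simp only [Units.val_mul, Units.val_mk0, norm_mul]; push_cast; ring

lemma norm_unitsPhase (z : ℂˣ) : ‖(unitsPhase z : ℂ)‖ = 1 := by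
  simp [unitsPhase]

lemma unitsPhase_mul_eq_of_norm_mul_eq (z : ℂˣ) {x : ℂ} (h : ‖(z : ℂ) * x‖ = ‖x‖) :
    (unitsPhase z : ℂ) * x = z * x := by
  rcases eq_or_ne x 0 with rfl | hx
  · simp
  · have hz : ‖(z : ℂ)‖ = 1 := by
      rwa [norm_mul, mul_eq_right₀ (norm_ne_zero_iff.mpr hx)] at h
    simp [unitsPhase, hz]

def compactTorus (d : ℕ) : Subgroup (Fin d → ℂˣ) where
  carrier := {t | ∀ i, ‖(t i : ℂ)‖ = 1}
  mul_mem' hs ht i := by simp [hs i, ht i]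
  one_mem' i := by simp
  inv_mem' ht i := by simp [ht i]

section Orbits

variable {d n : ℕ} (M : Matrix (Fin d) (Fin n) ℤ)

lemma torusAct_apply (t : Fin d → ℂˣ) (v : Fin n → ℂ) (j : Fin n) :
    torusAct M t v j = weightChar M t j * v j := by
  simp [torusAct]

lemma torusAct_eq_smul (t : Fin d → ℂˣ) (v : Fin n → ℂ) :
    torusAct M t v = weightChar M t • v :=
  funext fun j => torusAct_apply M t v j

lemma torusOrbit_eq_orbit (v : Fin n → ℂ) :
    torusOrbit M v = MulAction.orbit (weightChar (G := ℂˣ) M).range v := by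
  ext w
  simp [torusOrbit, MulAction.mem_orbit_iff, torusAct_eq_smul, eq_comm]

lemma compactOrbit_eq_orbit (v : Fin n → ℂ) :
    compactOrbit M v = MulAction.orbit ((compactTorus d).map (weightChar M)) v := by
  ext w
  simp only [compactOrbit, MulAction.mem_orbit_iff, torusAct_eq_smul]
  constructor
  · rintro ⟨t, ht, rfl⟩
    exact ⟨⟨_, t, ht, rfl⟩, rfl⟩
  · rintro ⟨⟨_, t, ht, rfl⟩, rfl⟩
    exact ⟨t, ht, rfl⟩

lemma torusOrbit_eq_iff_mem (v w : Fin n → ℂ) :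
    torusOrbit M v = torusOrbit M w ↔ v ∈ torusOrbit M w := by
  simp only [torusOrbit_eq_orbit, MulAction.orbit_eq_iff]

lemma compactOrbit_eq_iff_mem (v w : Fin n → ℂ) :
    compactOrbit M v = compactOrbit M w ↔ v ∈ compactOrbit M w := by
  simp only [compactOrbit_eq_orbit, MulAction.orbit_eq_iff]

lemma mem_compactOrbit_iff (v w : Fin n → ℂ) :
    w ∈ compactOrbit M v ↔ w ∈ torusOrbit M v ∧ ∀ j, ‖w j‖ = ‖v j‖ := by
  constructor
  · rintro ⟨t, ht, rfl⟩
    exact ⟨⟨t, rfl⟩, fun j => by simp [torusAct, norm_prod, norm_zpow, ht]⟩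
  · rintro ⟨⟨t, rfl⟩, hnorm⟩
    refine ⟨unitsPhase ∘ t, fun i => norm_unitsPhase (t i), funext fun j => ?_⟩
    simp only [torusAct_apply] at hnorm ⊢
    rw [weightChar_comp]
    exact (unitsPhase_mul_eq_of_norm_mul_eq _ (hnorm j)).symm

end Orbits

/-- `O_{K,v} = O_{K,w}` iff `O_{T,v} = O_{T,w}` and `|v j| = |w j|` for all `j`. -/
theorem compact_orbit_eq_iff {d n : ℕ} (M : Matrix (Fin d) (Fin n) ℤ) (v w : Fin n → ℂ) :
    compactOrbit M v = compactOrbit M w ↔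
      (torusOrbit M v = torusOrbit M w ∧ ∀ j, ‖v j‖ = ‖w j‖) := by
  rw [compactOrbit_eq_iff_mem, torusOrbit_eq_iff_mem, mem_compactOrbit_iff]
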